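/- arXiv:2503.12546 — 4 statements merged into one kernel-verified Lean document; each statement's English description precedes it below -/
import Mathlib

section
/- Let Φ = {c : aⱼᵀc ≤ bⱼ, j ∈ J} with aⱼ ≠ 0 and define the feasible set F_P = {(c,r) ∈ ℝ^l × ℝ : r ≥ 0, aⱼᵀc + ‖aⱼ‖r ≤ bⱼ ∀j}. Then the interior of Φ is nonempty if and only if the interior of F_P (in ℝ^{l+1}) is nonempty. -/
open scoped RealInnerProductSpace
open Metric Set

/-!
A pair `(c, r)` with `r ≥ 0` satisfies the lifted constraints exactly when the closed ball of
radius `r` about `c` lies in `Φ`, since `sup_{‖u‖ ≤ r} ⟪a, c + u⟫ = ⟪a, c⟫ + ‖a‖ r`. So `F_P` is the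
set of closed balls inscribed in `Φ`, and for any subset `S` of a metric space this set has
nonempty interior iff `S` does: an interior point of `S` is the centre of small balls whose
centre and radius may both be perturbed, and conversely the centres of an open set of inscribed
balls form an open subset of `S`.
-/

def inscribedBalls {E : Type*} [PseudoMetricSpace E] (S : Set E) : Set (E × ℝ) :=
  {z | 0 ≤ z.2 ∧ closedBall z.1 z.2 ⊆ S}

section Metric

variable {E : Type*} [PseudoMetricSpace E] {S : Set E}

theorem fst_image_inscribedBalls_subset : Prod.fst '' inscribedBalls S ⊆ S := by
  rintro _ ⟨z, ⟨hr, hball⟩, rfl⟩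
  exact hball (mem_closedBall_self hr)

theorem interior_nonempty_of_interior_inscribedBalls_nonempty
    (h : (interior (inscribedBalls S)).Nonempty) : (interior S).Nonempty :=
  (h.image Prod.fst).mono <| (isOpenMap_fst.image_interior_subset _).trans <|
    interior_mono fst_image_inscribedBalls_subset

theorem interior_inscribedBalls_nonempty_of_interior_nonempty
    (h : (interior S).Nonempty) : (interior (inscribedBalls S)).Nonempty := by
  obtain ⟨c, hc⟩ := h
  obtain ⟨ε, hε, hballS⟩ := Metric.mem_nhds_iff.mp (mem_interior_iff_mem_nhds.mp hc)
  let U : Set (E × ℝ) := {z | 0 < z.2 ∧ z.2 + dist z.1 c < ε}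
  have hU_open : IsOpen U :=
    (isOpen_lt continuous_const continuous_snd).inter <|
      isOpen_lt (continuous_snd.add (continuous_fst.dist continuous_const)) continuous_const
  have hU_sub : U ⊆ inscribedBalls S := fun z hz =>
    ⟨hz.1.le, (closedBall_subset_ball' hz.2).trans hballS⟩
  have hcU : (c, ε / 2) ∈ U := ⟨half_pos hε, by simp only [dist_self]; linarith⟩
  exact ⟨_, interior_maximal hU_sub hU_open hcU⟩

theorem interior_inscribedBalls_nonempty_iff :
    (interior (inscribedBalls S)).Nonempty ↔ (interior S).Nonempty :=
  ⟨interior_nonempty_of_interior_inscribedBalls_nonempty,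
    interior_inscribedBalls_nonempty_of_interior_nonempty⟩

end Metric

section InnerProduct

variable {E : Type*} [NormedAddCommGroup E] [InnerProductSpace ℝ E]

theorem closedBall_subset_halfspace_iff {a c : E} {r β : ℝ} (hr : 0 ≤ r) :
    closedBall c r ⊆ {x | ⟪a, x⟫ ≤ β} ↔ ⟪a, c⟫ + ‖a‖ * r ≤ β := by
  constructor
  · intro hball
    by_cases ha : a = 0
    · simpa [ha] using hball (mem_closedBall_self hr)
    have hna : 0 < ‖a‖ := norm_pos_iff.mpr ha
    -- the point of the ball farthest in the direction `a`
    have hmem : c + (r / ‖a‖) • a ∈ closedBall c r := by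
      rw [mem_closedBall, dist_eq_norm, add_sub_cancel_left, norm_smul, Real.norm_eq_abs,
        abs_of_nonneg (by positivity), div_mul_cancel₀ _ hna.ne']
    have hval : ⟪a, c + (r / ‖a‖) • a⟫ = ⟪a, c⟫ + ‖a‖ * r := by
      rw [inner_add_right, real_inner_smul_right, real_inner_self_eq_norm_sq]
      field_simp
    simpa only [mem_ofPred_eq, hval] using hball hmem
  · intro h x hx
    have hdist : ‖x - c‖ ≤ r := by rwa [← dist_eq_norm, ← mem_closedBall]
    calc ⟪a, x⟫ = ⟪a, c⟫ + ⟪a, x - c⟫ := by rw [← inner_add_right, add_sub_cancel]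
      _ ≤ ⟪a, c⟫ + ‖a‖ * ‖x - c‖ := by gcongr; exact real_inner_le_norm a (x - c)
      _ ≤ ⟪a, c⟫ + ‖a‖ * r := by gcongr
      _ ≤ β := h

theorem inscribedBalls_polyhedron {ι : Type*} (a : ι → E) (b : ι → ℝ) :
    inscribedBalls {c | ∀ j, ⟪a j, c⟫ ≤ b j} =
      {z | 0 ≤ z.2 ∧ ∀ j, ⟪a j, z.1⟫ + ‖a j‖ * z.2 ≤ b j} := by
  ext ⟨c, r⟩
  simp only [inscribedBalls, mem_ofPred_eq, and_congr_right_iff]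
  intro hr
  simp only [← closedBall_subset_halfspace_iff hr, subset_def, mem_ofPred_eq]
  exact ⟨fun h j x hx => h x hx j, fun h x hx j => h j x hx⟩

end InnerProduct

theorem stmt3_general (l N : ℕ) (a : Fin N → EuclideanSpace ℝ (Fin l)) (b : Fin N → ℝ) :
    (interior {c : EuclideanSpace ℝ (Fin l) | ∀ j, ⟪a j, c⟫ ≤ b j}).Nonempty ↔
      (interior {z : EuclideanSpace ℝ (Fin l) × ℝ |
        0 ≤ z.2 ∧ ∀ j, ⟪a j, z.1⟫ + ‖a j‖ * z.2 ≤ b j}).Nonempty := by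
  rw [← inscribedBalls_polyhedron, interior_inscribedBalls_nonempty_iff]

/-- The polytope `Φ` has nonempty interior iff the lifted Chebyshev feasible set
`F_P = {(c, r) | r ≥ 0 ∧ ∀ j, ⟪a j, c⟫ + ‖a j‖ r ≤ b j}` has nonempty interior. -/
theorem stmt3 (l N : ℕ) (a : Fin N → EuclideanSpace ℝ (Fin l)) (b : Fin N → ℝ)
    (ha : ∀ j, a j ≠ 0) :
    (interior {c : EuclideanSpace ℝ (Fin l) | ∀ j, ⟪a j, c⟫ ≤ b j}).Nonempty ↔
      (interior {z : EuclideanSpace ℝ (Fin l) × ℝ |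
        0 ≤ z.2 ∧ ∀ j, ⟪a j, z.1⟫ + ‖a j‖ * z.2 ≤ b j}).Nonempty :=
  stmt3_general l N a b
end

section
/- Let h : ℝⁿ → ℝ be locally Lipschitz and suppose the one-sided directional derivative h'(x; d) = lim_{σ→0⁺} (h(x+σd) − h(x))/σ exists for all x, d. If x : [0,T] → ℝⁿ is absolutely continuous with h'(x(t); ẋ(t)) ≥ −α·h(x(t)) for almost every t, where α > 0, and h(x(0)) ≥ 0, then h(x(t)) ≥ 0 for all t ∈ [0,T]. -/
/-!
The function `y = h ∘ x` is absolutely continuous, since `h` is Lipschitz on the compact image of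
the absolutely continuous curve `x`. At almost every `t` the curve has velocity `x' t` (Lebesgue
differentiation) and `y` is differentiable; the Lipschitz bound lets one replace `x (t + σ)` by
`x t + σ • x' t` in the right difference quotient of `y`, so `y' t = D (x t) (x' t) ≥ -α y t`.
Hence `(e^{α t} y t)' ≥ 0` almost everywhere, and the fundamental theorem of calculus for
absolutely continuous functions gives `e^{α t} y t ≥ y 0 ≥ 0`.
-/

open Filter MeasureTheory Set Topology Real

theorem AbsolutelyContinuousOnInterval.of_dist_le_mul {X Y : Type*} [PseudoMetricSpace X]
    [PseudoMetricSpace Y] {f : ℝ → X} {g : ℝ → Y} {a b : ℝ}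
    (hg : AbsolutelyContinuousOnInterval g a b) (K : ℝ)
    (hfg : ∀ u ∈ uIcc a b, ∀ v ∈ uIcc a b, dist (f u) (f v) ≤ K * dist (g u) (g v)) :
    AbsolutelyContinuousOnInterval f a b := by
  unfold AbsolutelyContinuousOnInterval at hg ⊢
  refine squeeze_zero' (Eventually.of_forall fun _ ↦ Finset.sum_nonneg fun _ _ ↦ dist_nonneg)
    ?_ (by simpa using hg.const_mul K)
  filter_upwards [mem_inf_of_right (mem_principal_self _)] with E hE
  rw [Finset.mul_sum]
  exact Finset.sum_le_sum fun i hi ↦ hfg _ (hE.1 i hi).1 _ (hE.1 i hi).2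

theorem LipschitzOnWith.comp_absolutelyContinuousOnInterval {X Y : Type*} [PseudoMetricSpace X]
    [PseudoMetricSpace Y] {g : X → Y} {K : NNReal} {s : Set X} {f : ℝ → X} {a b : ℝ}
    (hg : LipschitzOnWith K g s) (hf : AbsolutelyContinuousOnInterval f a b)
    (hfs : MapsTo f (uIcc a b) s) : AbsolutelyContinuousOnInterval (g ∘ f) a b :=
  hf.of_dist_le_mul K fun _ hu _ hv ↦ hg.dist_le_mul _ (hfs hu) _ (hfs hv)

section Primitive

variable {E : Type*} [NormedAddCommGroup E] [NormedSpace ℝ E] {x x' : ℝ → E} {a b : ℝ}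

theorem absolutelyContinuousOnInterval_of_eq_add_integral (hab : a ≤ b)
    (hx' : IntegrableOn x' (Icc a b)) (hx : ∀ t ∈ Icc a b, x t = x a + ∫ s in a..t, x' s) :
    AbsolutelyContinuousOnInterval x a b := by
  have hint : IntervalIntegrable x' volume a b :=
    (intervalIntegrable_iff_integrableOn_Icc_of_le hab).2 hx'
  have hsub : ∀ {c d}, c ∈ Icc a b → d ∈ Icc a b → IntervalIntegrable x' volume c d :=
    fun hc hd ↦ hint.mono_set (by rw [uIcc_of_le hab]; exact uIcc_subset_Icc hc hd)
  have ha : a ∈ Icc a b := left_mem_Icc.2 hab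
  -- `x` moves no more than the primitive of `‖x'‖`, which is absolutely continuous
  refine (hint.norm.absolutelyContinuousOnInterval_intervalIntegral
    left_mem_uIcc).of_dist_le_mul 1 fun u hu v hv ↦ ?_
  rw [uIcc_of_le hab] at hu hv
  rw [one_mul, hx u hu, hx v hv, dist_add_left, dist_eq_norm', Real.dist_eq, abs_sub_comm,
    intervalIntegral.integral_interval_sub_left (hsub ha hv) (hsub ha hu),
    intervalIntegral.integral_interval_sub_left (hsub ha hv).norm (hsub ha hu).norm]
  exact intervalIntegral.norm_integral_le_abs_integral_norm

theorem ae_hasDerivAt_of_eq_add_integral [CompleteSpace E] (hab : a ≤ b)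
    (hx' : IntegrableOn x' (Icc a b)) (hx : ∀ t ∈ Icc a b, x t = x a + ∫ s in a..t, x' s) :
    ∀ᵐ t, t ∈ Icc a b → HasDerivAt x (x' t) t := by
  have hint : IntervalIntegrable x' volume a b :=
    (intervalIntegrable_iff_integrableOn_Icc_of_le hab).2 hx'
  have hne : ∀ c, ∀ᵐ t : ℝ, t ≠ c := fun c ↦ by simp [ae_iff, measure_singleton]
  filter_upwards [hint.ae_hasDerivAt_integral, hne a, hne b] with t hderiv hta htb ht
  have htI : t ∈ Ioo a b := ⟨lt_of_le_of_ne ht.1 hta.symm, lt_of_le_of_ne ht.2 htb⟩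
  have hxt : (fun s ↦ x a + ∫ r in a..s, x' r) =ᶠ[𝓝 t] x :=
    eventually_of_mem (Ioo_mem_nhds htI.1 htI.2) fun s hs ↦ (hx s (Ioo_subset_Icc_self hs)).symm
  rw [uIcc_of_le hab] at hderiv
  exact ((hderiv ht a (left_mem_Icc.2 hab)).const_add (x a)).congr_of_eventuallyEq hxt.symm

end Primitive

section DirectionalDerivative

variable {E : Type*} [NormedAddCommGroup E] [NormedSpace ℝ E] {h : E → ℝ} {γ : ℝ → E} {v : E}
  {t d : ℝ}

theorem LocallyLipschitz.tendsto_slope_comp_right (hh : LocallyLipschitz h)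
    (hγ : HasDerivAt γ v t)
    (hd : Tendsto (fun σ : ℝ ↦ (h (γ t + σ • v) - h (γ t)) / σ) (𝓝[>] 0) (𝓝 d)) :
    Tendsto (fun σ : ℝ ↦ (h (γ (t + σ)) - h (γ t)) / σ) (𝓝[>] 0) (𝓝 d) := by
  obtain ⟨K, U, hU, hK⟩ := hh (γ t)
  have hcurve : Tendsto (fun σ : ℝ ↦ γ (t + σ)) (𝓝 0) (𝓝 (γ t)) :=
    hγ.continuousAt.tendsto.comp ((continuous_const_add t).tendsto' 0 t (add_zero t))
  have hline : Tendsto (fun σ : ℝ ↦ γ t + σ • v) (𝓝 0) (𝓝 (γ t)) := by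
    simpa using tendsto_const_nhds.add (tendsto_id.smul_const v) (x := 𝓝 (0 : ℝ))
  have hslope : Tendsto (fun σ : ℝ ↦ σ⁻¹ • (γ (t + σ) - γ t) - v) (𝓝[>] 0) (𝓝 0) := by
    simpa using hγ.tendsto_slope_zero_right.sub_const v
  -- the two quotients differ by at most `K` times the first-order error of `γ`
  have herr : Tendsto
      (fun σ : ℝ ↦ (h (γ (t + σ)) - h (γ t)) / σ - (h (γ t + σ • v) - h (γ t)) / σ)
      (𝓝[>] 0) (𝓝 0) := by
    refine squeeze_zero_norm' ?_ (by simpa using hslope.norm.const_mul (K : ℝ))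
    filter_upwards [self_mem_nhdsWithin, nhdsWithin_le_nhds (hcurve.eventually hU),
      nhdsWithin_le_nhds (hline.eventually hU)] with σ (hσ : 0 < σ) hcurveσ hlineσ
    have hid : σ⁻¹ • (γ (t + σ) - γ t) - v = σ⁻¹ • (γ (t + σ) - (γ t + σ • v)) := by
      simp only [smul_sub, smul_add, inv_smul_smul₀ hσ.ne']
      abel
    rw [← sub_div, sub_sub_sub_cancel_right, hid, norm_smul, norm_div, Real.norm_eq_abs,
      norm_inv, Real.norm_eq_abs, abs_of_pos hσ, div_eq_inv_mul, mul_left_comm,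
      ← dist_eq_norm, ← Real.dist_eq]
    gcongr
    exact hK.dist_le_mul _ hcurveσ _ hlineσ
  simpa using herr.add hd

theorem LocallyLipschitz.deriv_comp_eq (hh : LocallyLipschitz h) (hγ : HasDerivAt γ v t)
    (hd : Tendsto (fun σ : ℝ ↦ (h (γ t + σ • v) - h (γ t)) / σ) (𝓝[>] 0) (𝓝 d))
    (hdiff : DifferentiableAt ℝ (h ∘ γ) t) : deriv (h ∘ γ) t = d := by
  refine tendsto_nhds_unique hdiff.hasDerivAt.tendsto_slope_zero_right ?_
  simpa [div_eq_inv_mul] using hh.tendsto_slope_comp_right hγ hd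

end DirectionalDerivative

theorem AbsolutelyContinuousOnInterval.mul_exp_le_of_le_deriv {y : ℝ → ℝ} {α a b : ℝ}
    (hab : a ≤ b) (hy : AbsolutelyContinuousOnInterval y a b)
    (hderiv : ∀ᵐ t, t ∈ Icc a b → -α * y t ≤ deriv y t) :
    y a * exp (-(α * (b - a))) ≤ y b := by
  have hexp : AbsolutelyContinuousOnInterval (fun t ↦ exp (α * t)) a b :=
    (by fun_prop : ContDiff ℝ 1 fun t ↦ exp (α * t)).contDiffOn.absolutelyContinuousOnInterval
  have hmono : 0 ≤ ∫ t in a..b, deriv (fun t ↦ exp (α * t)) t * y t + exp (α * t) * deriv y t := by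
    refine intervalIntegral.integral_nonneg_of_ae_restrict hab ?_
    filter_upwards [(ae_restrict_iff' measurableSet_Icc).2 hderiv] with t ht
    have hexp' : deriv (fun t ↦ exp (α * t)) t = exp (α * t) * α := by
      simpa using ((hasDerivAt_id t).const_mul α).exp.deriv
    rw [Pi.zero_apply, hexp', mul_assoc, ← mul_add]
    exact mul_nonneg (exp_pos _).le (by linarith)
  rw [hexp.integral_deriv_mul_eq_sub hy, sub_nonneg] at hmono
  calc y a * exp (-(α * (b - a))) = exp (α * a) * y a * exp (-(α * b)) := by
        rw [mul_comm (exp _), mul_assoc, ← exp_add]; ring_nf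
    _ ≤ exp (α * b) * y b * exp (-(α * b)) := by gcongr
    _ = y b := by rw [mul_comm (exp _), mul_assoc, ← exp_add]; simp

theorem stmt11_general (n : ℕ) (h : EuclideanSpace ℝ (Fin n) → ℝ)
    (hLip : LocallyLipschitz h)
    (D : EuclideanSpace ℝ (Fin n) → EuclideanSpace ℝ (Fin n) → ℝ)
    (hD : ∀ x d, Tendsto (fun σ : ℝ => (h (x + σ • d) - h x) / σ)
      (nhdsWithin 0 (Set.Ioi 0)) (nhds (D x d)))
    (T : ℝ) (hT : 0 < T) (x : ℝ → EuclideanSpace ℝ (Fin n))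
    (x' : ℝ → EuclideanSpace ℝ (Fin n))
    (hx'int : MeasureTheory.IntegrableOn x' (Set.Icc 0 T))
    (hAC : ∀ t ∈ Set.Icc 0 T, x t = x 0 + ∫ s in (0:ℝ)..t, x' s)
    (α : ℝ)
    (hineq : ∀ᵐ t ∂(MeasureTheory.volume.restrict (Set.Icc 0 T)),
      D (x t) (x' t) ≥ -α * h (x t))
    (h0 : 0 ≤ h (x 0)) :
    ∀ t ∈ Set.Icc 0 T, 0 ≤ h (x t) := by
  intro t ht
  have hxAC := absolutelyContinuousOnInterval_of_eq_add_integral hT.le hx'int hAC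
  obtain ⟨K, hK⟩ := hLip.locallyLipschitzOn.exists_lipschitzOnWith_of_compact
    (isCompact_uIcc.image_of_continuousOn hxAC.continuousOn)
  have hyAC : AbsolutelyContinuousOnInterval (h ∘ x) 0 T :=
    hK.comp_absolutelyContinuousOnInterval hxAC (mapsTo_image x _)
  have hderiv : ∀ᵐ s, s ∈ Icc 0 T → -α * (h ∘ x) s ≤ deriv (h ∘ x) s := by
    filter_upwards [ae_hasDerivAt_of_eq_add_integral hT.le hx'int hAC, hyAC.ae_differentiableAt,
      (ae_restrict_iff' measurableSet_Icc).1 hineq] with s hxs hys hs hsI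
    rw [uIcc_of_le hT.le] at hys
    rw [hLip.deriv_comp_eq (hxs hsI) (hD _ _) (hys hsI)]
    exact hs hsI
  have hyAC' : AbsolutelyContinuousOnInterval (h ∘ x) 0 t :=
    hyAC.mono (uIcc_subset_uIcc left_mem_uIcc (Icc_subset_uIcc ht))
  calc 0 ≤ h (x 0) * exp (-(α * (t - 0))) := mul_nonneg h0 (exp_pos _).le
    _ ≤ h (x t) := hyAC'.mul_exp_le_of_le_deriv ht.1 <| by
      filter_upwards [hderiv] with s hs hst using hs ⟨hst.1, hst.2.trans ht.2⟩

/-- Nonsmooth barrier comparison lemma: if `h` is locally Lipschitz with one-sided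
directional derivative `D`, `x` is absolutely continuous on `[0, T]` (an integral of an
integrable derivative `x'`), the barrier inequality `D (x t) (x' t) ≥ -α h (x t)` holds
for almost every `t ∈ [0, T]` with `α > 0`, and `h (x 0) ≥ 0`, then `h (x t) ≥ 0` on `[0, T]`. -/
theorem stmt11 (n : ℕ) (h : EuclideanSpace ℝ (Fin n) → ℝ)
    (hLip : LocallyLipschitz h)
    (D : EuclideanSpace ℝ (Fin n) → EuclideanSpace ℝ (Fin n) → ℝ)
    (hD : ∀ x d, Tendsto (fun σ : ℝ => (h (x + σ • d) - h x) / σ)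
      (nhdsWithin 0 (Set.Ioi 0)) (nhds (D x d)))
    (T : ℝ) (hT : 0 < T) (x : ℝ → EuclideanSpace ℝ (Fin n))
    (x' : ℝ → EuclideanSpace ℝ (Fin n))
    (hx'int : MeasureTheory.IntegrableOn x' (Set.Icc 0 T))
    (hAC : ∀ t ∈ Set.Icc 0 T, x t = x 0 + ∫ s in (0:ℝ)..t, x' s)
    (α : ℝ) (hα : 0 < α)
    (hineq : ∀ᵐ t ∂(MeasureTheory.volume.restrict (Set.Icc 0 T)),
      D (x t) (x' t) ≥ -α * h (x t))
    (h0 : 0 ≤ h (x 0)) :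
    ∀ t ∈ Set.Icc 0 T, 0 ≤ h (x t) :=
  stmt11_general n h hLip D hD T hT x x' hx'int hAC α hineq h0
end

section
/- Let v(t) := h(x(t)) where h is locally Lipschitz with directional derivatives and x is differentiable at t. Then the right derivative of v at t exists and equals h'(x(t); ẋ(t)). -/
open Filter Topology Asymptotics

theorem LocallyLipschitz.isBigO_comp_sub_comp {α E F : Type*} [SeminormedAddCommGroup E]
    [SeminormedAddCommGroup F] {h : E → F} (hh : LocallyLipschitz h) {l : Filter α}
    {u w : α → E} {p : E} (hu : Tendsto u l (𝓝 p)) (hw : Tendsto w l (𝓝 p)) :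
    (fun a => h (u a) - h (w a)) =O[l] fun a => u a - w a := by
  obtain ⟨K, s, hs, hK⟩ := hh p
  refine IsBigO.of_bound K ?_
  filter_upwards [hu hs, hw hs] with a hua hwa
  simpa only [dist_eq_norm] using hK.dist_le_mul _ hua _ hwa

/-- Since `h` is Lipschitz near `x t` and `x (t + σ) = x t + σ • ẋ + o(σ)`, replacing the curve
by its tangent line changes `h` only by `o(σ)`; the remaining quotient is the directional one. -/
theorem stmt12 (n : ℕ) (h : EuclideanSpace ℝ (Fin n) → ℝ)
    (hLip : LocallyLipschitz h)
    (D : EuclideanSpace ℝ (Fin n) → EuclideanSpace ℝ (Fin n) → ℝ)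
    (hD : ∀ x d, Tendsto (fun σ : ℝ => (h (x + σ • d) - h x) / σ)
      (nhdsWithin 0 (Set.Ioi 0)) (nhds (D x d)))
    (x : ℝ → EuclideanSpace ℝ (Fin n)) (t : ℝ) (xdot : EuclideanSpace ℝ (Fin n))
    (hx : HasDerivAt x xdot t) :
    Tendsto (fun σ : ℝ => (h (x (t + σ)) - h (x t)) / σ)
      (nhdsWithin 0 (Set.Ioi 0)) (nhds (D (x t) xdot)) := by
  have hcurve : Tendsto (fun σ => x (t + σ)) (𝓝 0) (𝓝 (x t)) :=
    hx.continuousAt.tendsto.comp (by simpa using (tendsto_id (x := 𝓝 (0 : ℝ))).const_add t)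
  have htangent : Tendsto (fun σ : ℝ => x t + σ • xdot) (𝓝 0) (𝓝 (x t)) := by
    simpa using ((tendsto_id (x := 𝓝 (0 : ℝ))).smul_const xdot).const_add (x t)
  have hdx : (fun σ => x (t + σ) - (x t + σ • xdot)) =o[𝓝 0] fun σ => σ := by
    simpa only [sub_sub] using hasDerivAt_iff_isLittleO_nhds_zero.mp hx
  have herr : Tendsto (fun σ => (h (x (t + σ)) - h (x t + σ • xdot)) / σ) (𝓝 0) (𝓝 0) :=
    ((hLip.isBigO_comp_sub_comp hcurve htangent).trans_isLittleO hdx).tendsto_div_nhds_zero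
  simpa [← add_div] using (herr.mono_left nhdsWithin_le_nhds).add (hD (x t) xdot)
end

section
/- Let F : ℝⁿ ⇒ ℝ^m be defined by F(x) = {z : g_j(z,x) ≤ 0, j ∈ J} with each g_j jointly continuous and convex in z. Fix x̄ such that F(x̄) is nonempty with nonempty interior (Slater point). Then F is lower semicontinuous at x̄: for every open set U with U ∩ F(x̄) ≠ ∅, there is a neighborhood V of x̄ such that U ∩ F(x) ≠ ∅ for all x ∈ V. -/
/-!
A feasible point `z` of `F x̄` is a limit of strictly feasible points: on the open segment from
`z` to a Slater point every convex constraint is strictly negative. Hence the open set `U` meets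
the strictly feasible set at some `w`, and by continuity `w` stays strictly feasible, so in
`F x`, for all `x` near `x̄`.
-/

open Set Filter Topology

theorem ConvexOn.lt_of_mem_openSegment {E : Type*} [AddCommMonoid E] [Module ℝ E] {s : Set E}
    {f : E → ℝ} (hf : ConvexOn ℝ s f) {x y z : E} {r : ℝ} (hx : x ∈ s) (hy : y ∈ s)
    (hxr : f x ≤ r) (hyr : f y < r) (hz : z ∈ openSegment ℝ x y) : f z < r := by
  obtain ⟨a, b, ha, hb, hab, rfl⟩ := hz
  calc f (a • x + b • y) ≤ a * f x + b * f y := hf.2 hx hy ha.le hb.le hab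
    _ < a * r + b * r :=
      add_lt_add_of_le_of_lt (mul_le_mul_of_nonneg_left hxr ha.le) (mul_lt_mul_of_pos_left hyr hb)
    _ = r := by rw [← add_mul, hab, one_mul]

theorem mem_closure_setOf_forall_lt_of_convexOn {ι E : Type*} [AddCommGroup E] [Module ℝ E]
    [TopologicalSpace E] [ContinuousAdd E] [ContinuousSMul ℝ E] {s : Set E} {f : ι → E → ℝ}
    (hf : ∀ j, ConvexOn ℝ s (f j)) {x y : E} {r : ℝ} (hx : x ∈ s) (hy : y ∈ s)
    (hxr : ∀ j, f j x ≤ r) (hyr : ∀ j, f j y < r) : x ∈ closure {z | ∀ j, f j z < r} :=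
  closure_mono (fun _ hz j => (hf j).lt_of_mem_openSegment hx hy (hxr j) (hyr j) hz)
    (segment_subset_closure_openSegment (left_mem_segment ℝ x y))

/-- Lower semicontinuity of the parametric feasible-set map
`F x = {z | g j z x ≤ 0 ∀ j}` at a point `x̄` satisfying the Slater condition,
with each `g j` jointly continuous and convex in `z`. -/
theorem stmt14 (n m M : ℕ)
    (g : Fin M → EuclideanSpace ℝ (Fin m) → EuclideanSpace ℝ (Fin n) → ℝ)
    (hgcont : ∀ j, Continuous fun p : EuclideanSpace ℝ (Fin m) × EuclideanSpace ℝ (Fin n) =>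
      g j p.1 p.2)
    (hgconv : ∀ j x, ConvexOn ℝ Set.univ fun z => g j z x)
    (F : EuclideanSpace ℝ (Fin n) → Set (EuclideanSpace ℝ (Fin m)))
    (hF : ∀ x, F x = {z | ∀ j, g j z x ≤ 0})
    (x₀ : EuclideanSpace ℝ (Fin n))
    (hSlater : ∃ z₀, ∀ j, g j z₀ x₀ < 0) :
    ∀ U : Set (EuclideanSpace ℝ (Fin m)), IsOpen U → (U ∩ F x₀).Nonempty →
      ∃ V ∈ nhds x₀, ∀ x ∈ V, (U ∩ F x).Nonempty := by
  rintro U hU ⟨z, hzU, hzF⟩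
  obtain ⟨z₀, hz₀⟩ := hSlater
  rw [hF] at hzF
  have hz : z ∈ closure {w | ∀ j, g j w x₀ < 0} :=
    mem_closure_setOf_forall_lt_of_convexOn (fun j => hgconv j x₀) (mem_univ z) (mem_univ z₀)
      hzF hz₀
  obtain ⟨w, hwU, hw⟩ := mem_closure_iff.1 hz U hU hzU
  have hgw : ∀ j, Continuous (g j w) := fun j => (hgcont j).comp (Continuous.prodMk_right w)
  refine ⟨{x | ∀ j, g j w x < 0}, ?_, fun x hx => ⟨w, hwU, ?_⟩⟩
  · exact eventually_all.2 fun j =>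
      (hgw j).continuousAt.eventually_lt continuousAt_const (hw j)
  · rw [hF]
    exact fun j => (hx j).le
end
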